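/- arXiv:2210.06992 — 2 statements merged into one kernel-verified Lean document; each statement's English description precedes it below -/
import Mathlib

section
/- Assume q is odd. Let a and b be uniformizers of F such that a·b⁻¹ is not a square in F, let E₁/F be a quadratic extension containing an element e₁ with e₁² = a, and let E₂/F be a quadratic extension containing an element e₂ with e₂² = b. Then every nonzero x ∈ F can be written as x = N_{E₁/F}(y) · N_{E₂/F}(z) for some nonzero y ∈ E₁ and nonzero z ∈ E₂. -/
/-!
Let `𝒪` be the ring of integers of `F`. It is finite over the complete ring `ℤ_p`, hence complete,
so Hensel's lemma applies: since `q` is odd, a unit of `𝒪` is a square as soon as its residue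
is, and as the residue field is finite, any two non-square units differ by a square. Writing
`b = a ν` with `ν` a unit, the hypothesis on `a b⁻¹` says that `ν` is not a square, so every
nonzero `x ∈ F` has the form `c²`, `-a c²`, `-b c²` or `(-a)(-b) c²`. Each of these is a product
of a norm from `E₁` and a norm from `E₂`, because `N(e₁) = -a`, `N(e₂) = -b` and `N(c) = c²`.
-/

open IsLocalRing

noncomputable section

variable (p : ℕ) [Fact p.Prime]

/-- The natural map `𝒪_F → 𝒪_E` between the integral closures of `ℤ_p` induced by an
extension `E/F` of `p`-adic fields. -/
def mapRingOfIntegers (F E : Type) [Field F] [Field E]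
    [Algebra ℤ_[p] F] [Algebra ℤ_[p] E] [Algebra F E] [IsScalarTower ℤ_[p] F E] :
    integralClosure ℤ_[p] F →+* integralClosure ℤ_[p] E where
  toFun x := ⟨algebraMap F E x, IsIntegral.map (IsScalarTower.toAlgHom ℤ_[p] F E) x.2⟩
  map_one' := by ext; simp
  map_mul' x y := by ext; simp
  map_zero' := by ext; simp
  map_add' x y := by ext; simp

open Polynomial IntermediateField

theorem norm_eq_neg_of_sq_eq_algebraMap {F E : Type*} [Field F] [Field E] [Algebra F E]
    (hd : Module.finrank F E = 2) {α : F} (hα : ¬IsSquare α) {e : E}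
    (he : e ^ 2 = algebraMap F E α) : Algebra.norm F e = -α := by
  have : FiniteDimensional F E := Module.finite_of_finrank_eq_succ hd
  have hint : IsIntegral F e := .of_finite F e
  have hmin : minpoly F e = X ^ 2 - C α :=
    (minpoly.eq_of_irreducible_of_monic
      (X_pow_sub_C_irreducible_of_prime Nat.prime_two fun b hb => hα ⟨b, by rw [← hb, sq]⟩)
      (by simp [he]) (monic_X_pow_sub_C _ two_ne_zero)).symm
  have hdeg : Module.finrank F F⟮e⟯ = 2 := by
    rw [adjoin.finrank hint, hmin, natDegree_X_pow_sub_C]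
  have htop : Module.finrank F⟮e⟯ E = 1 := by
    have := Module.finrank_mul_finrank F F⟮e⟯ E
    rw [hdeg, hd] at this
    omega
  rw [Algebra.norm_eq_norm_adjoin, htop, pow_one, ← adjoin.powerBasis_gen hint,
    Algebra.PowerBasis.norm_gen_eq_coeff_zero_minpoly, adjoin.powerBasis_dim,
    adjoin.powerBasis_gen, minpoly_gen, hmin]
  simp

section AdicCompleteness

open AdicCompletion TensorProduct

universe u

theorem IsAdicComplete.of_moduleFinite {R M : Type u} [CommRing R] [IsNoetherianRing R]
    [AddCommGroup M] [Module R M] [Module.Finite R M] (I : Ideal R) [IsAdicComplete I R] :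
    IsAdicComplete I M := by
  let ofR := LinearEquiv.ofBijective (of I R) (of_bijective_iff.mpr ‹_›)
  have hof : of I M = (ofTensorProduct I M).restrictScalars R ∘ₗ (ofR.rTensor M).toLinearMap ∘ₗ
      (TensorProduct.lid R M).symm.toLinearMap := by
    refine LinearMap.ext fun x => ?_
    simp [ofR, show of I R 1 = 1 from map_one (algebraMap R (AdicCompletion I R))]
  rw [← of_bijective_iff, hof]
  exact ((ofTensorProduct_bijective_of_finite_of_isNoetherian I M).comp
    (ofR.rTensor M).bijective).comp (TensorProduct.lid R M).symm.bijective

theorem IsPrecomplete.of_le_of_pow_le {R M : Type*} [CommRing R] [AddCommGroup M] [Module R M]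
    {I J : Ideal R} (hIJ : I ≤ J) {e : ℕ} (hJI : J ^ e ≤ I) [hI : IsPrecomplete I M] :
    IsPrecomplete J M := by
  have hJI' : J ^ (e + 1) ≤ I := (Ideal.pow_le_pow_right e.le_succ).trans hJI
  refine ⟨fun f hf => ?_⟩
  obtain ⟨L, hL⟩ := hI.prec (f := fun k => f ((e + 1) * k)) fun {m n} hmn =>
    (hf (Nat.mul_le_mul_left (e + 1) hmn)).mono
      (Submodule.smul_mono_left (by rw [pow_mul]; exact Ideal.pow_right_mono hJI' m))
  exact ⟨L, fun n => (hf (Nat.le_mul_of_pos_left n e.succ_pos)).trans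
    ((hL n).mono (Submodule.smul_mono_left (Ideal.pow_right_mono hIJ n)))⟩

end AdicCompleteness

section Squares

theorem FiniteField.isSquare_mul_of_not_isSquare {K : Type*} [Field K] [Finite K] {a b : K}
    (ha : ¬IsSquare a) (hb : ¬IsSquare b) : IsSquare (a * b) := by
  classical
  have := Fintype.ofFinite K
  have hab : a * b ≠ 0 :=
    mul_ne_zero (by rintro rfl; exact ha .zero) (by rintro rfl; exact hb .zero)
  rw [← quadraticChar_one_iff_isSquare hab, map_mul,
    quadraticChar_neg_one_iff_not_isSquare.mpr ha, quadraticChar_neg_one_iff_not_isSquare.mpr hb]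
  norm_num

theorem IsLocalRing.isUnit_two_of_odd_card_residueField {R : Type*} [CommRing R] [IsLocalRing R]
    (hq : Odd (Nat.card (ResidueField R))) : IsUnit (2 : R) := by
  have : Finite (ResidueField R) := Nat.finite_of_card_ne_zero hq.pos.ne'
  have := Fintype.ofFinite (ResidueField R)
  rw [← residue_ne_zero_iff_isUnit, map_ofNat]
  intro h2
  obtain ⟨m, hm⟩ := hq
  have hcard := Nat.cast_card_eq_zero (ResidueField R)
  rw [← Nat.card_eq_fintype_card, hm] at hcard
  simp [h2] at hcard

theorem IsIntegrallyClosed.isSquare_algebraMap_iff {R K : Type*} [CommRing R] [Field K]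
    [Algebra R K] [IsFractionRing R K] [IsIntegrallyClosed R] {w : R} :
    IsSquare (algebraMap R K w) ↔ IsSquare w := by
  refine ⟨fun ⟨c, hc⟩ => ?_, fun h => h.map _⟩
  have hint : IsIntegral R c :=
    ⟨X ^ 2 - C w, monic_X_pow_sub_C _ two_ne_zero, by simp [hc, sq]⟩
  obtain ⟨d, rfl⟩ := IsIntegrallyClosed.isIntegral_iff.mp hint
  exact ⟨d, IsFractionRing.injective R K (by simp [hc])⟩

namespace HenselianLocalRing

variable {R : Type*} [CommRing R] [HenselianLocalRing R] (h2 : IsUnit (2 : R))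
include h2

theorem isSquare_of_isSquare_residue {w : R} (hw : IsUnit w)
    (hsq : IsSquare (residue R w)) : IsSquare w := by
  obtain ⟨s, hs⟩ := hsq
  obtain ⟨c, rfl⟩ := residue_surjective s
  have hc : IsUnit c := by
    rw [← residue_ne_zero_iff_isUnit]
    rintro h
    rw [h, mul_zero] at hs
    exact (residue_ne_zero_iff_isUnit w).mpr hw hs
  obtain ⟨d, hd, -⟩ := HenselianLocalRing.is_henselian (X ^ 2 - C w)
    (monic_X_pow_sub_C _ two_ne_zero) c
    (by rw [← residue_eq_zero_iff]; simp [hs, sq]) (by simpa [one_add_one_eq_two] using h2.mul hc)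
  exact ⟨d, by simpa [sub_eq_zero, sq, eq_comm] using hd⟩

theorem isSquare_or_isSquare_mul [Finite (ResidueField R)] {u v : R} (hu : IsUnit u)
    (hv : IsUnit v) (hv' : ¬IsSquare v) : IsSquare u ∨ IsSquare (u * v) :=
  or_iff_not_imp_left.mpr fun hu' => isSquare_of_isSquare_residue h2 (hu.mul hv) <| by
    rw [map_mul]
    exact FiniteField.isSquare_mul_of_not_isSquare (mt (isSquare_of_isSquare_residue h2 hu) hu')
      (mt (isSquare_of_isSquare_residue h2 hv) hv')

end HenselianLocalRing

variable {R K : Type*} [CommRing R] [IsDomain R] [IsDiscreteValuationRing R]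
  [Field K] [Algebra R K] [IsFractionRing R K]

theorem IsDiscreteValuationRing.exists_eq_unit_mul_sq_of_irreducible {a : R} (ha : Irreducible a)
    {x : K} (hx : x ≠ 0) :
    ∃ (u : Rˣ) (c : K), x = algebraMap R K u * c ^ 2 ∨
      x = algebraMap R K u * algebraMap R K a * c ^ 2 := by
  have hA : algebraMap R K a ≠ 0 :=
    (map_ne_zero_iff _ (IsFractionRing.injective R K)).mpr ha.ne_zero
  obtain ⟨n, u, rfl⟩ := exists_units_eq_smul_zpow_of_irreducible ha hx
  obtain ⟨k, rfl | rfl⟩ := Int.even_or_odd' n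
  · refine ⟨u, algebraMap R K a ^ k, .inl ?_⟩
    rw [Units.smul_def, Algebra.smul_def, mul_comm 2 k, zpow_mul, zpow_ofNat]
  · refine ⟨u, algebraMap R K a ^ k, .inr ?_⟩
    rw [Units.smul_def, Algebra.smul_def, zpow_add₀ hA, zpow_one, mul_comm 2 k, zpow_mul,
      zpow_ofNat, mul_assoc, mul_comm (_ ^ 2)]

theorem exists_eq_mul_sq_of_irreducible [HenselianLocalRing R] [Finite (ResidueField R)]
    (h2 : IsUnit (2 : R)) {a b : R} (ha : Irreducible a) (hb : Irreducible b)
    (hab : ¬IsSquare (algebraMap R K a / algebraMap R K b)) {x : K} (hx : x ≠ 0) :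
    ∃ c : K, c ≠ 0 ∧ (x = c ^ 2 ∨ x = -algebraMap R K a * c ^ 2 ∨
      x = -algebraMap R K b * c ^ 2 ∨ x = -algebraMap R K a * -algebraMap R K b * c ^ 2) := by
  obtain ⟨ν, rfl⟩ := IsDiscreteValuationRing.associated_of_irreducible R ha hb
  set A := algebraMap R K a
  set N := algebraMap R K ν
  have hB : algebraMap R K (a * ν) = A * N := map_mul _ _ _
  have hA : A ≠ 0 := (map_ne_zero_iff _ (IsFractionRing.injective R K)).mpr ha.ne_zero
  have hN : N ≠ 0 := (map_ne_zero_iff _ (IsFractionRing.injective R K)).mpr ν.ne_zero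
  have hν : ¬IsSquare (ν : R) := by
    rintro ⟨d, hd⟩
    refine hab ⟨(algebraMap R K d)⁻¹, ?_⟩
    rw [hB, div_mul_cancel_left₀ hA, ← mul_inv, ← map_mul, ← hd]
  have hclass (u : Rˣ) : ∃ d : K, algebraMap R K u = d ^ 2 ∨ algebraMap R K u * N = d ^ 2 := by
    rcases HenselianLocalRing.isSquare_or_isSquare_mul h2 u.isUnit ν.isUnit hν
      with ⟨d, hd⟩ | ⟨d, hd⟩
    · exact ⟨algebraMap R K d, .inl (by rw [hd, map_mul, sq])⟩
    · exact ⟨algebraMap R K d, .inr (by rw [← map_mul, hd, map_mul, sq])⟩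
  suffices ∃ c : K, x = c ^ 2 ∨ x = -A * c ^ 2 ∨ x = -(A * N) * c ^ 2 ∨
      x = -A * -(A * N) * c ^ 2 by
    obtain ⟨c, hc⟩ := this
    refine ⟨c, ?_, by rwa [hB]⟩
    rintro rfl
    exact hx (by rcases hc with h | h | h | h <;> simp [h])
  obtain ⟨u, c, rfl | rfl⟩ := IsDiscreteValuationRing.exists_eq_unit_mul_sq_of_irreducible ha hx
  · obtain ⟨d, hd | hd⟩ := hclass u
    · exact ⟨d * c, .inl (by rw [hd]; ring)⟩
    · refine ⟨d * c / (A * N), .inr (.inr (.inr ?_))⟩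
      rw [div_pow, mul_pow, ← hd]
      field_simp
  · obtain ⟨d, hd | hd⟩ := hclass (-u)
    · refine ⟨d * c, .inr (.inl ?_)⟩
      rw [mul_pow, ← hd, Units.val_neg, map_neg]
      ring
    · refine ⟨d * c / N, .inr (.inr (.inl ?_))⟩
      rw [div_pow, mul_pow, ← hd, Units.val_neg, map_neg]
      field_simp
      ring

end Squares

section RingOfIntegers

variable (F : Type) [Field F] [Algebra ℚ_[p] F] [FiniteDimensional ℚ_[p] F]
  [Algebra ℤ_[p] F] [IsScalarTower ℤ_[p] ℚ_[p] F]

instance : FaithfulSMul ℤ_[p] (integralClosure ℤ_[p] F) := by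
  rw [faithfulSMul_iff_algebraMap_injective]
  refine Function.Injective.of_comp (f := algebraMap (integralClosure ℤ_[p] F) F) ?_
  rw [← RingHom.coe_comp, ← IsScalarTower.algebraMap_eq,
    IsScalarTower.algebraMap_eq ℤ_[p] ℚ_[p] F, RingHom.coe_comp]
  exact (algebraMap ℚ_[p] F).injective.comp (IsFractionRing.injective ℤ_[p] ℚ_[p])

variable [IsLocalRing (integralClosure ℤ_[p] F)]

theorem isDiscreteValuationRing_integralClosure :
    IsDiscreteValuationRing (integralClosure ℤ_[p] F) := by
  have := integralClosure.isDedekindDomain ℤ_[p] ℚ_[p] F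
  have hF : ¬IsField (integralClosure ℤ_[p] F) := by
    rw [← Algebra.IsIntegral.isField_iff_isField (FaithfulSMul.algebraMap_injective ℤ_[p] _)]
    exact IsDiscreteValuationRing.not_isField ℤ_[p]
  exact ((IsDiscreteValuationRing.TFAE _ hF).out 0 2).mpr this

theorem henselianLocalRing_integralClosure : HenselianLocalRing (integralClosure ℤ_[p] F) := by
  have := isDiscreteValuationRing_integralClosure p F
  have : Module.Finite ℤ_[p] (integralClosure ℤ_[p] F) :=
    IsIntegralClosure.finite ℤ_[p] ℚ_[p] F _
  have : IsAdicComplete (maximalIdeal ℤ_[p]) (integralClosure ℤ_[p] F) := .of_moduleFinite _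
  have : IsPrecomplete ((maximalIdeal ℤ_[p]).map (algebraMap ℤ_[p] (integralClosure ℤ_[p] F)))
      (integralClosure ℤ_[p] F) := IsPrecomplete.map_algebraMap_iff.mpr inferInstance
  obtain ⟨n, hn⟩ := exists_maximalIdeal_pow_eq_of_principal _
    (IsPrincipalIdealRing.principal _) ((maximalIdeal ℤ_[p]).map (algebraMap ℤ_[p] _)) (by
      rw [Ne, Ideal.map_eq_bot_iff_of_injective
        (FaithfulSMul.algebraMap_injective ℤ_[p] (integralClosure ℤ_[p] F))]
      exact IsDiscreteValuationRing.not_a_field')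
  have : IsAdicComplete (maximalIdeal (integralClosure ℤ_[p] F)) (integralClosure ℤ_[p] F) :=
    { toIsPrecomplete := .of_le_of_pow_le (map_maximalIdeal_le _) hn.ge }
  exact { is_henselian := fun f hf a₀ h₁ h₂ =>
    HenselianRing.is_henselian f hf a₀ h₁ (h₂.map _) }

end RingOfIntegers

theorem norms_two_ramified_quadratics (F : Type) [Field F] [Algebra ℚ_[p] F] [FiniteDimensional ℚ_[p] F]
    [Algebra ℤ_[p] F] [IsScalarTower ℤ_[p] ℚ_[p] F]
    [IsLocalRing (integralClosure ℤ_[p] F)]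
    (hq : Odd (Nat.card (ResidueField (integralClosure ℤ_[p] F))))
    (E₁ : Type) [Field E₁] [Algebra F E₁]
    (E₂ : Type) [Field E₂] [Algebra F E₂]
    (a b : integralClosure ℤ_[p] F) (ha : Irreducible a) (hb : Irreducible b)
    (hab : ¬ ∃ c : F, c ^ 2 = (a : F) * ((b : F))⁻¹)
    (hd₁ : Module.finrank F E₁ = 2)
    (e₁ : E₁) (he₁ : e₁ ^ 2 = algebraMap F E₁ ((a : F)))
    (hd₂ : Module.finrank F E₂ = 2)
    (e₂ : E₂) (he₂ : e₂ ^ 2 = algebraMap F E₂ ((b : F))) :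
    ∀ x : F, x ≠ 0 → ∃ (y : E₁) (z : E₂), y ≠ 0 ∧ z ≠ 0 ∧
      x = Algebra.norm F y * Algebra.norm F z := by
  intro x hx
  have := isDiscreteValuationRing_integralClosure p F
  have := henselianLocalRing_integralClosure p F
  have : Finite (ResidueField (integralClosure ℤ_[p] F)) := Nat.finite_of_card_ne_zero hq.pos.ne'
  have : IsFractionRing (integralClosure ℤ_[p] F) F :=
    integralClosure.isFractionRing_of_finite_extension ℚ_[p] F
  have hN₁ : Algebra.norm F e₁ = -a := norm_eq_neg_of_sq_eq_algebraMap hd₁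
    (IsIntegrallyClosed.isSquare_algebraMap_iff.not.mpr ha.not_isSquare) he₁
  have hN₂ : Algebra.norm F e₂ = -b := norm_eq_neg_of_sq_eq_algebraMap hd₂
    (IsIntegrallyClosed.isSquare_algebraMap_iff.not.mpr hb.not_isSquare) he₂
  have he₁0 : e₁ ≠ 0 := by rintro rfl; exact ha.ne_zero (by simpa using he₁.symm)
  have he₂0 : e₂ ≠ 0 := by rintro rfl; exact hb.ne_zero (by simpa using he₂.symm)
  obtain ⟨c, hc, hx⟩ : ∃ c : F, c ≠ 0 ∧ (x = c ^ 2 ∨ x = -a * c ^ 2 ∨ x = -b * c ^ 2 ∨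
      x = -a * -b * c ^ 2) := exists_eq_mul_sq_of_irreducible
    (isUnit_two_of_odd_card_residueField hq) ha hb
    (fun ⟨c, hc⟩ => hab ⟨c, by rw [sq, ← hc, div_eq_mul_inv]; rfl⟩) hx
  have hc₁ : Algebra.norm F (algebraMap F E₁ c) = c ^ 2 := by rw [Algebra.norm_algebraMap, hd₁]
  have hc₂ : Algebra.norm F (algebraMap F E₂ c) = c ^ 2 := by rw [Algebra.norm_algebraMap, hd₂]
  have hc₁0 : algebraMap F E₁ c ≠ 0 := by simpa using hc
  rcases hx with rfl | rfl | rfl | rfl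
  · exact ⟨_, 1, hc₁0, one_ne_zero, by rw [hc₁, map_one, mul_one]⟩
  · exact ⟨_, 1, mul_ne_zero hc₁0 he₁0, one_ne_zero, by rw [map_mul, hc₁, hN₁, map_one]; ring⟩
  · exact ⟨1, algebraMap F E₂ c * e₂, one_ne_zero, mul_ne_zero (by simpa using hc) he₂0,
      by rw [map_mul, hc₂, hN₂, map_one]; ring⟩
  · exact ⟨_, e₂, mul_ne_zero hc₁0 he₁0, he₂0, by rw [map_mul, hc₁, hN₁, hN₂]; ring⟩
end
end

section
/- Let R be a discrete valuation ring that is complete (adically complete) with respect to its maximal ideal, and let π ∈ R be a uniformizer (an irreducible element). If α ∈ R satisfies α − 1 ∈ (8π), the ideal generated by 8π, then there exists β ∈ R with β⁴ = α. -/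
/-!
Since `(1 + 2y)² = 1 + 4(y² + y)`, and Hensel's lemma solves `y² + y = c` with `y ∈ I` whenever
`c ∈ I` (`0` is a simple root modulo `I`), every `1 + 4c` with `c ∈ I` is a square. Moreover
`y (y + 1) = c` with `y + 1` a unit, so the square root `1 + 2y` is again of the form `1 + 4c'`
as soon as `c ∈ 2I`. Writing `α = 1 + 4 · 2πt`, taking a square root twice gives a fourth root.
-/

open Polynomial

namespace HenselianRing

variable {R : Type*} [CommRing R] {I : Ideal R} [HenselianRing R I]

theorem exists_sq_add_self_eq {c : R} (hc : c ∈ I) : ∃ y ∈ I, y ^ 2 + y = c := by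
  have hmonic : (X ^ 2 + X - C c : R[X]).Monic := by monicity!
  obtain ⟨y, hroot, hy⟩ := is_henselian (X ^ 2 + X - C c) hmonic 0
    (by simpa using I.neg_mem hc) (by simp)
  refine ⟨y, by simpa using hy, ?_⟩
  simpa [sub_eq_zero] using hroot

theorem exists_sq_eq_one_add_four_mul {c : R} (hc : c ∈ I) :
    ∃ d : R, (1 + 2 * c * d) ^ 2 = 1 + 4 * c := by
  obtain ⟨y, hyI, hy⟩ := exists_sq_add_self_eq hc
  obtain ⟨d, hd⟩ := (Ideal.mem_jacobson_bot.mp (jac hyI) 1).exists_right_inv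
  refine ⟨d, ?_⟩
  have hyc : y = c * d := by linear_combination d * hy - y * hd
  rw [mul_assoc, ← hyc]
  linear_combination 4 * hy

end HenselianRing

/-- Let `R` be a discrete valuation ring that is complete with respect to its maximal ideal,
and let `π ∈ R` be a uniformizer. If `α ∈ R` satisfies `α - 1 ∈ (8π)`, then `α` is a fourth
power in `R`. -/
theorem fourth_power_of_congruent_one (R : Type) [CommRing R] [IsDomain R]
    [IsDiscreteValuationRing R] [IsAdicComplete (IsLocalRing.maximalIdeal R) R]
    (π : R) (hπ : Irreducible π) (α : R) (hα : α - 1 ∈ Ideal.span {8 * π}) :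
    ∃ β : R, β ^ 4 = α := by
  obtain ⟨t, ht⟩ := Ideal.mem_span_singleton'.mp hα
  have hπm : π ∈ IsLocalRing.maximalIdeal R := hπ.not_isUnit
  obtain ⟨d, hd⟩ := HenselianRing.exists_sq_eq_one_add_four_mul
    (Ideal.mul_mem_right t _ (Ideal.mul_mem_left _ 2 hπm))
  obtain ⟨e, he⟩ := HenselianRing.exists_sq_eq_one_add_four_mul
    (Ideal.mul_mem_right (t * d) _ hπm)
  refine ⟨1 + 2 * (π * (t * d)) * e, ?_⟩
  calc (1 + 2 * (π * (t * d)) * e) ^ 4 = ((1 + 2 * (π * (t * d)) * e) ^ 2) ^ 2 := by ring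
    _ = (1 + 2 * (2 * π * t) * d) ^ 2 := by rw [he]; ring
    _ = α := by rw [hd]; linear_combination ht
end
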